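/- arXiv:2203.16523 — 3 statements merged into one kernel-verified Lean document; each statement's English description precedes it below -/
import Mathlib

section
/- The partial derivatives of the Lucas polynomial U_n(w,t) of the first kind satisfy (w^2-4t)·∂U_n/∂t = -((n-1)·V_{n-1}(w,t) - w·U_{n-1}(w,t)) and (w^2-4t)·∂U_n/∂w = n·V_n(w,t) - w·U_n(w,t), for all n ≥ 1. -/
/-!
Write `Δ = w ^ 2 - 4 t` and `U'_n = ∂U_n/∂w`. Differentiating the recurrence shows that
`∂U_{n+1}/∂t = -U'_n`, so both identities reduce to `Δ U'_n = n V_n - w U_n`. This one is proved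
by induction from the recurrence `U'_{n+2} = U_{n+1} + w U'_{n+1} - t U'_n` together with the
classical identity `Δ U_n = 2 V_{n+1} - w V_n`.
-/

/-- Lucas polynomial sequence of the first kind:
`U 0 = 0`, `U 1 = 1`, `U n = w * U (n-1) - t * U (n-2)`. -/
def lucasU {R : Type*} [CommRing R] (w t : R) : ℕ → R
  | 0 => 0
  | 1 => 1
  | n + 2 => w * lucasU w t (n + 1) - t * lucasU w t n

/-- Lucas polynomial sequence of the second kind:
`V 0 = 2`, `V 1 = w`, `V n = w * V (n-1) - t * V (n-2)`. -/
def lucasV {R : Type*} [CommRing R] (w t : R) : ℕ → R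
  | 0 => 2
  | 1 => w
  | n + 2 => w * lucasV w t (n + 1) - t * lucasV w t n

section Algebra

variable {R : Type*} [CommRing R] (w t : R)

@[simp] lemma lucasU_zero : lucasU w t 0 = 0 := rfl

@[simp] lemma lucasU_one : lucasU w t 1 = 1 := rfl

lemma lucasU_add_two (n : ℕ) :
    lucasU w t (n + 2) = w * lucasU w t (n + 1) - t * lucasU w t n := rfl

@[simp] lemma lucasV_zero : lucasV w t 0 = 2 := rfl

@[simp] lemma lucasV_one : lucasV w t 1 = w := rfl

lemma lucasV_add_two (n : ℕ) :
    lucasV w t (n + 2) = w * lucasV w t (n + 1) - t * lucasV w t n := rfl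

lemma sq_sub_four_mul_mul_lucasU (n : ℕ) :
    (w ^ 2 - 4 * t) * lucasU w t n = 2 * lucasV w t (n + 1) - w * lucasV w t n := by
  induction n using Nat.twoStepInduction with
  | zero => simp; ring
  | one => simp [lucasV_add_two]; ring
  | more n ih₀ ih₁ =>
    rw [lucasU_add_two, lucasV_add_two w t (n + 1), lucasV_add_two w t n]
    rw [lucasV_add_two] at ih₁
    linear_combination w * ih₁ - t * ih₀

/-- The partial derivative `∂U_n/∂w`, given by the differentiated recurrence. -/
def lucasUDeriv : ℕ → R
  | 0 => 0
  | 1 => 0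
  | n + 2 => lucasU w t (n + 1) + w * lucasUDeriv (n + 1) - t * lucasUDeriv n

@[simp] lemma lucasUDeriv_zero : lucasUDeriv w t 0 = 0 := rfl

@[simp] lemma lucasUDeriv_one : lucasUDeriv w t 1 = 0 := rfl

lemma lucasUDeriv_add_two (n : ℕ) :
    lucasUDeriv w t (n + 2)
      = lucasU w t (n + 1) + w * lucasUDeriv w t (n + 1) - t * lucasUDeriv w t n := rfl

lemma sq_sub_four_mul_mul_lucasUDeriv (n : ℕ) :
    (w ^ 2 - 4 * t) * lucasUDeriv w t n = n * lucasV w t n - w * lucasU w t n := by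
  induction n using Nat.twoStepInduction with
  | zero => simp
  | one => simp
  | more n ih₀ ih₁ =>
    have hU := sq_sub_four_mul_mul_lucasU w t (n + 1)
    rw [lucasV_add_two] at hU
    rw [lucasUDeriv_add_two, lucasU_add_two, lucasV_add_two]
    push_cast at ih₁ ⊢
    linear_combination hU + w * ih₁ - t * ih₀

end Algebra

section Analysis

variable {𝕜 : Type*} [NontriviallyNormedField 𝕜] (w t : 𝕜)

lemma hasDerivAt_lucasU_left (n : ℕ) :
    HasDerivAt (fun v => lucasU v t n) (lucasUDeriv w t n) w := by
  induction n using Nat.twoStepInduction with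
  | zero => simpa using hasDerivAt_const w (0 : 𝕜)
  | one => simpa using hasDerivAt_const w (1 : 𝕜)
  | more n ih₀ ih₁ =>
    have h : HasDerivAt (fun v => v * lucasU v t (n + 1) - t * lucasU v t n)
        (1 * lucasU w t (n + 1) + w * lucasUDeriv w t (n + 1) - t * lucasUDeriv w t n) w :=
      ((hasDerivAt_id w).mul ih₁).sub (ih₀.const_mul t)
    exact h.congr_deriv (by rw [one_mul, lucasUDeriv_add_two])

lemma hasDerivAt_lucasU_succ_right (n : ℕ) :
    HasDerivAt (fun s => lucasU w s (n + 1)) (-lucasUDeriv w t n) t := by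
  induction n using Nat.twoStepInduction with
  | zero => simpa using hasDerivAt_const t (1 : 𝕜)
  | one => simpa [lucasU_add_two] using hasDerivAt_const t w
  | more n ih₀ ih₁ =>
    have h : HasDerivAt (fun s => w * lucasU w s (n + 2) - s * lucasU w s (n + 1))
        (w * -lucasUDeriv w t (n + 1) - (1 * lucasU w t (n + 1) + t * -lucasUDeriv w t n)) t :=
      (ih₁.const_mul w).sub ((hasDerivAt_id t).mul ih₀)
    exact h.congr_deriv (by rw [lucasUDeriv_add_two]; ring)

end Analysis

/-- Partial derivatives of the Lucas polynomial of the first kind: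
`(w^2-4t) * ∂U_n/∂t = -((n-1) V_{n-1} - w U_{n-1})` and
`(w^2-4t) * ∂U_n/∂w = n V_n - w U_n` for all `n ≥ 1`. -/
theorem lucasU_deriv (w t : ℝ) (n : ℕ) (hn : 1 ≤ n) :
    (w ^ 2 - 4 * t) * deriv (fun s : ℝ => lucasU w s n) t
        = -(((n : ℝ) - 1) * lucasV w t (n - 1) - w * lucasU w t (n - 1)) ∧
    (w ^ 2 - 4 * t) * deriv (fun v : ℝ => lucasU v t n) w
        = (n : ℝ) * lucasV w t n - w * lucasU w t n := by
  obtain ⟨m, rfl⟩ : ∃ m, n = m + 1 := ⟨n - 1, by omega⟩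
  rw [(hasDerivAt_lucasU_succ_right w t m).deriv, (hasDerivAt_lucasU_left w t (m + 1)).deriv,
    mul_neg, sq_sub_four_mul_mul_lucasUDeriv, sq_sub_four_mul_mul_lucasUDeriv]
  simp
end

section
/- For an integer r ≥ 2 and integers a, b with 0 ≤ a, b ≤ r-2, the signed trigonometric identity Σ_{j=1}^{r-1} (-1)^j · sin((a+1)jπ/r) · sin((b+1)jπ/r) = -(r/2)·δ_{a+b, r-2} holds. -/
/-!
Since `(-1) ^ j * cos θ = cos (θ + j π)`, the product-to-sum formula turns each summand into
`(cos (k₁ j π / r) - cos (k₂ j π / r)) / 2` with `k₁ = a - b + r` and `k₂ = a + b + 2 + r`.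
The Dirichlet-kernel formula gives `∑_{j < r} cos (k j π / r) = (1 - (-1) ^ k) / 2` unless
`2 r ∣ k`, in which case every term is `1`. Now `2 r ∤ k₁`, the two numbers have the same parity,
and `2 r ∣ k₂` exactly when `a + b = r - 2`.
-/

open Real Finset

theorem neg_one_pow_mul_sin_mul_sin (n : ℕ) (x y : ℝ) :
    (-1) ^ n * sin x * sin y = (cos (x - y + n * π) - cos (x + y + n * π)) / 2 := by
  rw [cos_add_nat_mul_pi, cos_add_nat_mul_pi, cos_sub, cos_add]
  ring

theorem sum_range_cos_mul_pi_div_of_dvd {r k : ℕ} (hk : 2 * r ∣ k) :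
    ∑ j ∈ range r, cos (k * j * π / r) = r := by
  obtain ⟨m, rfl⟩ := hk
  rcases eq_or_ne r 0 with rfl | hr
  · simp
  have hterm (j : ℕ) : cos ((2 * r * m : ℕ) * j * π / r) = 1 := by
    rw [← cos_nat_mul_two_pi (m * j)]
    congr 1
    push_cast
    field_simp
  simp only [hterm, sum_const, card_range, nsmul_eq_mul, mul_one]

theorem sum_range_cos_mul_pi_div_of_not_dvd {r k : ℕ} (hr : r ≠ 0) (hk : ¬2 * r ∣ k) :
    ∑ j ∈ range r, cos (k * j * π / r) = (1 - (-1) ^ k) / 2 := by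
  have hhalf : sin (k * π / r / 2) ≠ 0 := by
    rw [Ne, sin_eq_zero_iff]
    rintro ⟨n, hn⟩
    refine hk (Int.natCast_dvd_natCast.mp ⟨n, ?_⟩)
    have : (k : ℝ) = 2 * r * n := by
      field_simp at hn
      linarith
    exact_mod_cast this
  have hsum := sin_mul_sum_cos r (k * π / r) 0
  have hx : (r : ℝ) * (k * π / r) / 2 = k * π / 2 := by field_simp
  have hy : ((r : ℝ) - 1) * (k * π / r) / 2 + 0 = k * π / 2 - k * π / r / 2 := by
    field_simp
    ring
  have hterm (j : ℕ) : k * π / r * j + 0 = k * j * π / r := by ring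
  rw [hx, hy, cos_sub] at hsum
  simp only [hterm] at hsum
  have hsin : 2 * sin (k * π / 2) * cos (k * π / 2) = 0 := by
    rw [← sin_two_mul, mul_div_cancel₀ _ two_ne_zero, sin_nat_mul_pi]
  have hsq : sin (k * π / 2) ^ 2 = (1 - (-1) ^ k) / 2 := by
    rw [sin_sq_eq_half_sub, mul_div_cancel₀ _ two_ne_zero, cos_nat_mul_pi]
    ring
  apply mul_left_cancel₀ hhalf
  linear_combination hsum + cos (k * π / r / 2) / 2 * hsin + sin (k * π / r / 2) * hsq

theorem sum_Icc_one_pred_eq_sum_range {M : Type*} [AddCommMonoid M] (f : ℕ → M) (hf : f 0 = 0)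
    (r : ℕ) : ∑ j ∈ Icc 1 (r - 1), f j = ∑ j ∈ range r, f j := by
  refine sum_subset (fun j hj ↦ ?_) (fun j hj hj' ↦ ?_)
  · simp only [mem_Icc, mem_range] at hj ⊢
    omega
  · simp only [mem_Icc, mem_range] at hj hj'
    rwa [show j = 0 by omega]

/-- Signed trigonometric identity:
`Σ_{j=1}^{r-1} (-1)^j sin((a+1)jπ/r) sin((b+1)jπ/r) = -(r/2) δ_{a+b, r-2}`
for `0 ≤ a, b ≤ r-2`. -/
theorem sin_signed_orthogonality (r a b : ℕ) (hr : 2 ≤ r) (ha : a ≤ r - 2) (hb : b ≤ r - 2) :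
    ∑ j ∈ Finset.Icc 1 (r - 1),
        (-1 : ℝ) ^ j * Real.sin ((a + 1) * j * π / r) * Real.sin ((b + 1) * j * π / r)
      = -(r / 2 : ℝ) * (if a + b = r - 2 then 1 else 0) := by
  have hr0 : r ≠ 0 := by omega
  have hterm (j : ℕ) :
      (-1 : ℝ) ^ j * sin ((a + 1) * j * π / r) * sin ((b + 1) * j * π / r)
        = (cos ((a + r - b : ℕ) * j * π / r) - cos ((a + b + 2 + r : ℕ) * j * π / r)) / 2 := by
    rw [neg_one_pow_mul_sin_mul_sin]
    congr 3 <;> push_cast [show b ≤ a + r by omega] <;> field_simp <;> ring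
  have hk₁ : ¬2 * r ∣ a + r - b := Nat.not_dvd_of_pos_of_lt (by omega) (by omega)
  rw [sum_Icc_one_pred_eq_sum_range _ (by simp), sum_congr rfl fun j _ ↦ hterm j, ← sum_div,
    sum_sub_distrib, sum_range_cos_mul_pi_div_of_not_dvd hr0 hk₁]
  have hparity : (-1 : ℝ) ^ (a + b + 2 + r) = (-1) ^ (a + r - b) := by
    rw [show a + b + 2 + r = a + r - b + 2 * (b + 1) by omega, pow_add, pow_mul, neg_one_sq,
      one_pow, mul_one]
  split_ifs with h
  · rw [sum_range_cos_mul_pi_div_of_dvd ⟨1, by omega⟩, ← hparity,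
      show a + b + 2 + r = 2 * r by omega, pow_mul, neg_one_sq, one_pow]
    ring
  · have hk₂ : ¬2 * r ∣ a + b + 2 + r := fun hdvd ↦
      h (by have := Nat.eq_of_dvd_of_lt_two_mul (by omega) hdvd (by omega); omega)
    rw [sum_range_cos_mul_pi_div_of_not_dvd hr0 hk₂, hparity]
    ring
end

section
/- Let r ≥ 3, 0 ≤ a ≤ r-2. The bivariate polynomial identity holds: ∂²U_{a+1}/∂t² + (2/r)·(∂U_{a+1}/∂t)(∂V_r/∂t) + (1/r)·U_{a+1}·(∂²V_r/∂t²) + (1/r²)·U_{a+1}·(∂V_r/∂t)² - t^{r-2}·U_{a+1} - (a/t)·∂U_{a+1}/∂t - (a/(tr))·U_{a+1}·∂V_r/∂t = ∂/∂w[ U_{a+1}·U_{r-2} + (1/t)·∂U_{a+1}/∂w ] + (1/r)·(∂V_r/∂w)·( U_{a+1}·U_{r-2} + (1/t)·∂U_{a+1}/∂w ), as an identity of rational functions in (w,t). -/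
/-!
Write `U_n` for `lucasU w t n`. Since `V_{n+1} = w U_{n+1} - 2t U_n`, one has
`∂_t V_r = -r U_{r-1}` and `∂_w V_r = r U_r`, so after multiplying by `t` the identity involves
only `U` and its partial derivatives. Put `n = a + 1` and eliminate `U_r = w U_{r-1} - t U_{r-2}`.
The identity then splits into three pieces that vanish separately:
* the terms with a factor `U_n`, by the Cassini identity `U_{r-1}² - U_r U_{r-2} = t^{r-2}`
  together with `∂_w U_{r-2} = -∂_t U_{r-1}`;
* the terms with a factor `U_{r-1}`, by the weighted homogeneity
  `w ∂_w U_n + 2t ∂_t U_n = (n-1) U_n`;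
* the rest, by the second-order equation `∂_w² U_n = t ∂_t² U_n - (n-1) ∂_t U_n`.
Differentiating the recurrence shows that the partial derivatives of `U` satisfy Lucas-type
recurrences in `n` themselves, so each of these identities is an induction on `n`.
-/

theorem hasDerivAt_of_recurrence {𝕜 : Type*} [NontriviallyNormedField 𝕜]
    {f c : ℕ → 𝕜 → 𝕜} {g c' : ℕ → 𝕜} {p q : 𝕜 → 𝕜} {p' q' x : 𝕜}
    (hp : HasDerivAt p p' x) (hq : HasDerivAt q q' x) (hc : ∀ n, HasDerivAt (c n) (c' n) x)
    (hf : ∀ n y, f (n + 2) y = p y * f (n + 1) y - q y * f n y + c n y)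
    (h0 : HasDerivAt (f 0) (g 0) x) (h1 : HasDerivAt (f 1) (g 1) x)
    (hg : ∀ n, g (n + 2) =
      p' * f (n + 1) x + p x * g (n + 1) - (q' * f n x + q x * g n) + c' n) :
    ∀ n, HasDerivAt (f n) (g n) x := by
  intro n
  induction n using Nat.twoStepInduction with
  | zero => exact h0
  | one => exact h1
  | more n ih0 ih1 =>
    rw [show f (n + 2) = fun y => p y * f (n + 1) y - q y * f n y + c n y from
      funext (hf n), hg]
    exact ((hp.mul ih1).sub (hq.mul ih0)).add (hc n)

section Partials

variable {R : Type*} [CommRing R]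

/- `∂_t U_n`, `∂_t² U_n`, `∂_w U_n`, `∂_w² U_n`, given by the recurrences obtained by
differentiating that of `lucasU`. -/

def lucasUt (w t : R) : ℕ → R
  | 0 => 0
  | 1 => 0
  | n + 2 => w * lucasUt w t (n + 1) - lucasU w t n - t * lucasUt w t n

def lucasUtt (w t : R) : ℕ → R
  | 0 => 0
  | 1 => 0
  | n + 2 => w * lucasUtt w t (n + 1) - 2 * lucasUt w t n - t * lucasUtt w t n

def lucasUw (w t : R) : ℕ → R
  | 0 => 0
  | 1 => 0
  | n + 2 => lucasU w t (n + 1) + w * lucasUw w t (n + 1) - t * lucasUw w t n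

def lucasUww (w t : R) : ℕ → R
  | 0 => 0
  | 1 => 0
  | n + 2 => 2 * lucasUw w t (n + 1) + w * lucasUww w t (n + 1) - t * lucasUww w t n

end Partials

section Derivatives

variable {𝕜 : Type*} [NontriviallyNormedField 𝕜] (w t : 𝕜) (n : ℕ)

theorem hasDerivAt_lucasU_t : HasDerivAt (fun s => lucasU w s n) (lucasUt w t n) t :=
  hasDerivAt_of_recurrence (f := fun n s => lucasU w s n) (hasDerivAt_const t w)
    (hasDerivAt_id t) (fun _ => hasDerivAt_const t 0) (fun _ _ => (add_zero _).symm)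
    (hasDerivAt_const t 0) (hasDerivAt_const t 1)
    (fun n => by simp only [lucasUt, id]; ring) n

theorem hasDerivAt_lucasUt_t : HasDerivAt (fun s => lucasUt w s n) (lucasUtt w t n) t :=
  hasDerivAt_of_recurrence (f := fun n s => lucasUt w s n) (c := fun n s => -lucasU w s n)
    (hasDerivAt_const t w) (hasDerivAt_id t) (fun n => (hasDerivAt_lucasU_t w t n).neg)
    (fun _ _ => by simp only [lucasUt, id]; ring) (hasDerivAt_const t 0) (hasDerivAt_const t 0)
    (fun n => by simp only [lucasUtt, id]; ring) n

theorem hasDerivAt_lucasU_w : HasDerivAt (fun v => lucasU v t n) (lucasUw w t n) w :=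
  hasDerivAt_of_recurrence (f := fun n v => lucasU v t n) (hasDerivAt_id w)
    (hasDerivAt_const w t) (fun _ => hasDerivAt_const w 0) (fun _ _ => (add_zero _).symm)
    (hasDerivAt_const w 0) (hasDerivAt_const w 1)
    (fun n => by simp only [lucasUw, id]; ring) n

theorem hasDerivAt_lucasUw_w : HasDerivAt (fun v => lucasUw v t n) (lucasUww w t n) w :=
  hasDerivAt_of_recurrence (f := fun n v => lucasUw v t n) (hasDerivAt_id w)
    (hasDerivAt_const w t) (c := fun n v => lucasU v t (n + 1))
    (fun n => hasDerivAt_lucasU_w w t (n + 1))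
    (fun _ _ => by simp only [lucasUw, id]; ring) (hasDerivAt_const w 0) (hasDerivAt_const w 0)
    (fun n => by simp only [lucasUww, id]; ring) n

end Derivatives

section Identities

variable {R : Type*} [CommRing R] (w t : R)

theorem lucasV_succ (n : ℕ) :
    lucasV w t (n + 1) = w * lucasU w t (n + 1) - 2 * t * lucasU w t n := by
  induction n using Nat.twoStepInduction with
  | zero => simp [lucasU, lucasV]
  | one => simp [lucasU, lucasV]; ring
  | more n ih0 ih1 =>
    simp only [lucasV, lucasU] at ih0 ih1 ⊢
    linear_combination w * ih1 - t * ih0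

theorem lucasU_cassini (n : ℕ) :
    lucasU w t (n + 1) ^ 2 - lucasU w t (n + 2) * lucasU w t n = t ^ n := by
  induction n with
  | zero => simp [lucasU]
  | succ n ih =>
    simp only [lucasU] at ih ⊢
    linear_combination t * ih

theorem lucasUw_eq_neg_lucasUt_succ (n : ℕ) : lucasUw w t n = -lucasUt w t (n + 1) := by
  induction n using Nat.twoStepInduction with
  | zero => simp [lucasUw, lucasUt]
  | one => simp [lucasUw, lucasUt, lucasU]
  | more n ih0 ih1 =>
    rw [lucasUw, lucasUt]
    linear_combination w * ih1 - t * ih0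

theorem mul_lucasUt_succ_add_two_mul_lucasUw_succ (n : ℕ) :
    w * lucasUt w t (n + 1) + 2 * lucasUw w t (n + 1) = (n + 1) * lucasU w t n := by
  induction n using Nat.twoStepInduction with
  | zero => simp [lucasUw, lucasUt, lucasU]
  | one => simp [lucasUw, lucasUt, lucasU]; ring
  | more n ih0 ih1 =>
    rw [lucasUw, lucasUt, lucasU]
    push_cast at ih1 ⊢
    linear_combination w * ih1 - t * ih0

theorem lucasU_euler (n : ℕ) :
    w * lucasUw w t n + 2 * t * lucasUt w t n = (n - 1) * lucasU w t n := by
  induction n using Nat.twoStepInduction with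
  | zero => simp [lucasUw, lucasUt, lucasU]
  | one => simp [lucasUw, lucasUt, lucasU]
  | more n ih0 ih1 =>
    rw [lucasUw, lucasUt, lucasU]
    push_cast at ih1 ⊢
    linear_combination w * ih1 - t * ih0

theorem lucasUww_eq (n : ℕ) :
    lucasUww w t n = t * lucasUtt w t n - (n - 1) * lucasUt w t n := by
  induction n using Nat.twoStepInduction with
  | zero => simp [lucasUww, lucasUtt, lucasUt]
  | one => simp [lucasUww, lucasUtt, lucasUt]
  | more n ih0 ih1 =>
    rw [lucasUww, lucasUtt, lucasUt]
    push_cast at ih1 ⊢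
    linear_combination w * ih1 - t * ih0 + mul_lucasUt_succ_add_two_mul_lucasUw_succ w t n

end Identities

section LucasVDerivatives

variable {𝕜 : Type*} [NontriviallyNormedField 𝕜] (w t : 𝕜) (n : ℕ)

theorem hasDerivAt_lucasV_w : HasDerivAt (fun v => lucasV v t n) (n * lucasU w t n) w :=
  hasDerivAt_of_recurrence (f := fun n v => lucasV v t n) (g := fun n => n * lucasU w t n)
    (hasDerivAt_id w) (hasDerivAt_const w t) (fun _ => hasDerivAt_const w 0)
    (fun _ _ => (add_zero _).symm) (by simpa [lucasV, lucasU] using hasDerivAt_const w (2 : 𝕜))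
    (by simpa [lucasV, lucasU] using hasDerivAt_id' w)
    (fun n => by simp only [id, lucasV_succ, lucasU]; push_cast; ring) n

theorem hasDerivAt_lucasV_t :
    HasDerivAt (fun s => lucasV w s n) (-(n * lucasU w t (n - 1))) t := by
  refine hasDerivAt_of_recurrence (f := fun n s => lucasV w s n)
    (g := fun n => -(n * lucasU w t (n - 1))) (hasDerivAt_const t w) (hasDerivAt_id t)
    (fun _ => hasDerivAt_const t 0) (fun _ _ => (add_zero _).symm)
    (by simpa [lucasV] using hasDerivAt_const t (2 : 𝕜))
    (by simpa [lucasV, lucasU] using hasDerivAt_const t w)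
    (fun n => ?_) n
  rcases n with _ | n
  · simp [lucasU, lucasV]
  · have hrec : lucasU w t (n + 2) = w * lucasU w t (n + 1) - t * lucasU w t n := rfl
    simp only [id, Nat.add_sub_cancel, lucasV_succ]
    push_cast
    linear_combination (-(n : 𝕜) - 3) * hrec

end LucasVDerivatives

/-- `t` times the theorem, once the derivatives of `V_{s+3}` are expressed through `U`. -/
theorem lucasU_airy_identity {R : Type*} [CommRing R] (w t : R) (a s : ℕ) :
    t * lucasUtt w t (a + 1) - 2 * t * lucasUt w t (a + 1) * lucasU w t (s + 2)
      - t * lucasU w t (a + 1) * lucasUt w t (s + 2)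
      + t * lucasU w t (a + 1) * lucasU w t (s + 2) ^ 2 - t ^ (s + 2) * lucasU w t (a + 1)
      - a * lucasUt w t (a + 1) + a * lucasU w t (a + 1) * lucasU w t (s + 2)
    = t * (lucasUw w t (a + 1) * lucasU w t (s + 1) + lucasU w t (a + 1) * lucasUw w t (s + 1))
      + lucasUww w t (a + 1)
      + lucasU w t (s + 3)
        * (t * lucasU w t (a + 1) * lucasU w t (s + 1) + lucasUw w t (a + 1)) := by
  have hrec : lucasU w t (s + 3) = w * lucasU w t (s + 2) - t * lucasU w t (s + 1) := rfl
  have heuler := lucasU_euler w t (a + 1)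
  have hpde := lucasUww_eq w t (a + 1)
  push_cast at heuler hpde
  linear_combination t * lucasU w t (a + 1) * lucasU_cassini w t (s + 1)
    - t * lucasU w t (a + 1) * lucasUw_eq_neg_lucasUt_succ w t (s + 1)
    - lucasU w t (s + 2) * heuler - hpde
    - lucasUw w t (a + 1) * hrec

theorem airy_lucas_total_derivative_identity_general (r a : ℕ) (hr : 3 ≤ r)
    (w t : ℝ) (ht : t ≠ 0) :
    deriv (fun s : ℝ => deriv (fun s' : ℝ => lucasU w s' (a + 1)) s) t
      + (2 / r) * deriv (fun s : ℝ => lucasU w s (a + 1)) t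
          * deriv (fun s : ℝ => lucasV w s r) t
      + (1 / r) * lucasU w t (a + 1)
          * deriv (fun s : ℝ => deriv (fun s' : ℝ => lucasV w s' r) s) t
      + (1 / (r : ℝ) ^ 2) * lucasU w t (a + 1)
          * (deriv (fun s : ℝ => lucasV w s r) t) ^ 2
      - t ^ (r - 2) * lucasU w t (a + 1)
      - ((a : ℝ) / t) * deriv (fun s : ℝ => lucasU w s (a + 1)) t
      - ((a : ℝ) / (t * r)) * lucasU w t (a + 1) * deriv (fun s : ℝ => lucasV w s r) t
    = deriv (fun v : ℝ =>
          lucasU v t (a + 1) * lucasU v t (r - 2)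
            + (1 / t) * deriv (fun v' : ℝ => lucasU v' t (a + 1)) v) w
      + (1 / r) * deriv (fun v : ℝ => lucasV v t r) w
          * (lucasU w t (a + 1) * lucasU w t (r - 2)
              + (1 / t) * deriv (fun v' : ℝ => lucasU v' t (a + 1)) w) := by
  obtain ⟨m, rfl⟩ : ∃ m, r = m + 3 := ⟨r - 3, by omega⟩
  have hUt : deriv (fun s => lucasU w s (a + 1)) = fun s => lucasUt w s (a + 1) :=
    funext fun s => (hasDerivAt_lucasU_t w s _).deriv
  have hVt :
      deriv (fun s => lucasV w s (m + 3)) = fun s => -((m + 3 : ℕ) * lucasU w s (m + 2)) :=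
    funext fun s => (hasDerivAt_lucasV_t w s _).deriv
  have hUw : deriv (fun v => lucasU v t (a + 1)) = fun v => lucasUw v t (a + 1) :=
    funext fun v => (hasDerivAt_lucasU_w v t _).deriv
  have hUtt : deriv (fun s => lucasUt w s (a + 1)) t = lucasUtt w t (a + 1) :=
    (hasDerivAt_lucasUt_t w t _).deriv
  have hVtt : deriv (fun s => -((m + 3 : ℕ) * lucasU w s (m + 2))) t
      = -((m + 3 : ℕ) * lucasUt w t (m + 2)) :=
    ((hasDerivAt_lucasU_t w t _).const_mul _).neg.deriv
  have hVw : deriv (fun v => lucasV v t (m + 3)) w = (m + 3 : ℕ) * lucasU w t (m + 3) :=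
    (hasDerivAt_lucasV_w w t _).deriv
  have hbracket : deriv (fun v => lucasU v t (a + 1) * lucasU v t (m + 1)
      + 1 / t * lucasUw v t (a + 1)) w
      = lucasUw w t (a + 1) * lucasU w t (m + 1) + lucasU w t (a + 1) * lucasUw w t (m + 1)
        + 1 / t * lucasUww w t (a + 1) :=
    (((hasDerivAt_lucasU_w w t _).mul (hasDerivAt_lucasU_w w t _)).add
      ((hasDerivAt_lucasUw_w w t _).const_mul _)).deriv
  simp only [show m + 3 - 2 = m + 1 from rfl, hUt, hVt, hUw, hUtt, hVtt, hVw, hbracket]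
  field_simp
  linear_combination lucasU_airy_identity w t a m

/-- Algebraic core of Proposition B.1: the image of the Airy–Lucas integrand under the
operator `d²/dt² - t^(r-2) - (a/t) d/dt` is a total `w`-derivative. As an identity of
rational functions in `(w,t)` (here stated pointwise for `t ≠ 0`):
`∂²U_{a+1}/∂t² + (2/r)(∂U_{a+1}/∂t)(∂V_r/∂t) + (1/r)U_{a+1}∂²V_r/∂t²
 + (1/r²)U_{a+1}(∂V_r/∂t)² - t^(r-2)U_{a+1} - (a/t)∂U_{a+1}/∂t - (a/(tr))U_{a+1}∂V_r/∂t
 = ∂/∂w[U_{a+1}U_{r-2} + (1/t)∂U_{a+1}/∂w]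
   + (1/r)(∂V_r/∂w)(U_{a+1}U_{r-2} + (1/t)∂U_{a+1}/∂w)`. -/
theorem airy_lucas_total_derivative_identity (r a : ℕ) (hr : 3 ≤ r) (ha : a ≤ r - 2)
    (w t : ℝ) (ht : t ≠ 0) :
    deriv (fun s : ℝ => deriv (fun s' : ℝ => lucasU w s' (a + 1)) s) t
      + (2 / r) * deriv (fun s : ℝ => lucasU w s (a + 1)) t
          * deriv (fun s : ℝ => lucasV w s r) t
      + (1 / r) * lucasU w t (a + 1)
          * deriv (fun s : ℝ => deriv (fun s' : ℝ => lucasV w s' r) s) t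
      + (1 / (r : ℝ) ^ 2) * lucasU w t (a + 1)
          * (deriv (fun s : ℝ => lucasV w s r) t) ^ 2
      - t ^ (r - 2) * lucasU w t (a + 1)
      - ((a : ℝ) / t) * deriv (fun s : ℝ => lucasU w s (a + 1)) t
      - ((a : ℝ) / (t * r)) * lucasU w t (a + 1) * deriv (fun s : ℝ => lucasV w s r) t
    = deriv (fun v : ℝ =>
          lucasU v t (a + 1) * lucasU v t (r - 2)
            + (1 / t) * deriv (fun v' : ℝ => lucasU v' t (a + 1)) v) w
      + (1 / r) * deriv (fun v : ℝ => lucasV v t r) w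
          * (lucasU w t (a + 1) * lucasU w t (r - 2)
              + (1 / t) * deriv (fun v' : ℝ => lucasU v' t (a + 1)) w) :=
  airy_lucas_total_derivative_identity_general r a hr w t ht
end
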